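/- arXiv:0906.3491 — 3 statements merged into one kernel-verified Lean document; each statement's English description precedes it below -/
import Mathlib

section
/- If ρ : F_n → PSL(2,C) is primitive-stable, then there exists r > 0 such that for every primitive element w of F_n, the translation length ℓ_ρ(w) of ρ(w) on H^3 satisfies ℓ_ρ(w) ≥ r·||w||, where ||w|| is the cyclically reduced word length of w. In particular, ρ(w) is loxodromic for every primitive w. -/
/-!
Conjugate a primitive `w` to a cyclically reduced (still primitive) `w'`, whose word length `m`
is at least `‖w‖`. The reduced word of `w'^k` is `k` copies of that of `w'`, and `w'^k` lies on
the axis of `w'`, so primitive stability gives `d(x, ρ(w')^k x) ≥ k m / K - δ`. For any point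
`p` the triangle inequality bounds the same distance by `2 d(x, p) + k d(p, ρ(w') p)`; letting
`k → ∞` yields `d(p, ρ(w') p) ≥ m / K`. Translation length is a conjugacy invariant.
-/

/-- Word length of an element of the free group: the length of its reduced word. -/
def wl {n : ℕ} (g : FreeGroup (Fin n)) : ℕ := (FreeGroup.toWord g).length

/-- Cyclically reduced word length `‖g‖`: the minimal word length in the conjugacy class. -/
noncomputable def cwl {n : ℕ} (g : FreeGroup (Fin n)) : ℕ :=
  sInf (Set.range fun x : FreeGroup (Fin n) => wl (x * g * x⁻¹))

/-- An element of the free group is primitive if it is the image of a standard generator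
under an automorphism, equivalently if it belongs to some free basis. -/
def IsPrimitive {n : ℕ} (g : FreeGroup (Fin n)) : Prop :=
  ∃ (φ : FreeGroup (Fin n) ≃* FreeGroup (Fin n)) (i : Fin n), φ (FreeGroup.of i) = g

/-- The formal inverse of a letter of the free group. -/
def invL {n : ℕ} (a : Fin n × Bool) : Fin n × Bool := (a.1, !a.2)

/-- A word is cyclically reduced if its first letter is not the inverse of its last letter. -/
def IsCyclicallyReduced {n : ℕ} (g : FreeGroup (Fin n)) : Prop :=
  ∀ h : g.toWord ≠ [], g.toWord.head h ≠ invL (g.toWord.getLast h)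

/-- The vertices of the Cayley tree lying on the axis (periodic bi-infinite leaf `w̄`) of a
cyclically reduced word `w`: the points `w^q · (prefix of w)`. -/
def axisVertices {n : ℕ} (w : FreeGroup (Fin n)) : Set (FreeGroup (Fin n)) :=
  {v | ∃ (q : ℤ) (s : ℕ), v = w ^ q * FreeGroup.mk (w.toWord.take s)}

/-- Translation length of an isometry: `inf_p d(p, φ p)`. -/
noncomputable def transLength {H : Type*} [MetricSpace H] (φ : H ≃ᵢ H) : ℝ :=
  ⨅ p : H, dist p (φ p)

/-- The orbit map `τ_{ρ,x}` (sending a vertex `v` of the Cayley tree to `ρ(v)·x`) is a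
`(K,δ)`-quasigeodesic along the leaf of `w`: image distances and tree distances
(`d_T(u,v) = wl (u⁻¹ v)`) agree up to multiplicative constant `K` and additive constant `δ`. -/
def AxisQuasiGeodesic {n : ℕ} {H : Type*} [MetricSpace H]
    (ρ : FreeGroup (Fin n) →* (H ≃ᵢ H)) (x : H) (K δ : ℝ) (w : FreeGroup (Fin n)) : Prop :=
  ∀ u ∈ axisVertices w, ∀ v ∈ axisVertices w,
    K⁻¹ * (wl (u⁻¹ * v) : ℝ) - δ ≤ dist ((ρ u) x) ((ρ v) x) ∧
      dist ((ρ u) x) ((ρ v) x) ≤ K * (wl (u⁻¹ * v) : ℝ) + δ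

/-- A representation `ρ : Fₙ → Isom(ℍ³)` is primitive-stable if for some constants `K, δ`
and basepoint `x`, the orbit map takes all primitive leaves to `(K,δ)`-quasigeodesics. -/
def PrimitiveStable {n : ℕ} {H : Type*} [MetricSpace H]
    (ρ : FreeGroup (Fin n) →* (H ≃ᵢ H)) : Prop :=
  ∃ (K δ : ℝ) (x : H), 1 ≤ K ∧ 0 ≤ δ ∧
    ∀ w, IsPrimitive w → IsCyclicallyReduced w → AxisQuasiGeodesic ρ x K δ w


section FreeGroup

open FreeGroup

variable {n : ℕ}

lemma isCyclicallyReduced_iff_toWord (g : FreeGroup (Fin n)) :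
    IsCyclicallyReduced g ↔ FreeGroup.IsCyclicallyReduced g.toWord := by
  rw [FreeGroup.isCyclicallyReduced_iff, and_iff_right isReduced_toWord]
  constructor
  · intro h a ha b hb hab
    have hne : g.toWord ≠ [] := by rintro h0; simp [h0] at ha
    rw [List.getLast?_eq_some_getLast hne, Option.mem_some_iff] at ha
    rw [List.head?_eq_some_head hne, Option.mem_some_iff] at hb
    by_contra hne2
    exact h hne (by rw [hb, ha]; exact Prod.ext hab.symm (Bool.eq_not.mpr (Ne.symm hne2)))
  · intro h hne heq
    have hcancel := h _ (List.getLast?_eq_some_getLast hne) _ (List.head?_eq_some_head hne)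
    simp [heq, invL] at hcancel

lemma exists_conj_isCyclicallyReduced (g : FreeGroup (Fin n)) :
    ∃ c : FreeGroup (Fin n), IsCyclicallyReduced (c * g * c⁻¹) := by
  set C := reduceCyclically.conjugator g.toWord
  set R := reduceCyclically g.toWord
  have hg : mk C * mk R * (mk C)⁻¹ = g := by
    rw [inv_mk, mul_mk, mul_mk, reduceCyclically.conj_conjugator_reduceCyclically, mk_toWord]
  have hR : FreeGroup.IsCyclicallyReduced R := reduceCyclically.isCyclicallyReduced isReduced_toWord
  refine ⟨(mk C)⁻¹, ?_⟩
  rw [show (mk C)⁻¹ * g * (mk C)⁻¹⁻¹ = mk R by rw [← hg]; group,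
    isCyclicallyReduced_iff_toWord, toWord_mk, hR.isReduced.reduce_eq]
  exact hR

lemma wl_pow {w : FreeGroup (Fin n)} (hw : IsCyclicallyReduced w) (k : ℕ) :
    wl (w ^ k) = k * wl w := by
  rw [isCyclicallyReduced_iff_toWord] at hw
  simp [wl, toWord_pow, (hw.flatten_replicate k).isReduced.reduce_eq]

lemma wl_pos {g : FreeGroup (Fin n)} (hg : g ≠ 1) : 0 < wl g := by
  simpa [wl, List.length_pos_iff] using hg

lemma cwl_le_wl_conj (g c : FreeGroup (Fin n)) : cwl g ≤ wl (c * g * c⁻¹) :=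
  Nat.sInf_le ⟨c, rfl⟩

lemma IsPrimitive.ne_one {g : FreeGroup (Fin n)} (hg : IsPrimitive g) : g ≠ 1 := by
  obtain ⟨φ, i, rfl⟩ := hg
  simp [of_ne_one]

lemma IsPrimitive.conj {g : FreeGroup (Fin n)} (hg : IsPrimitive g) (c : FreeGroup (Fin n)) :
    IsPrimitive (c * g * c⁻¹) := by
  obtain ⟨φ, i, rfl⟩ := hg
  exact ⟨φ.trans (MulAut.conj c), i, rfl⟩

lemma pow_mem_axisVertices (w : FreeGroup (Fin n)) (k : ℤ) : w ^ k ∈ axisVertices w :=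
  ⟨k, 0, by simp [← one_eq_mk]⟩

end FreeGroup

namespace IsometryEquiv

variable {H : Type*} [MetricSpace H]

lemma dist_pow_apply_le (φ : H ≃ᵢ H) (p : H) (k : ℕ) :
    dist p ((φ ^ k) p) ≤ k * dist p (φ p) := by
  have hstep : ∀ i, dist ((φ ^ i) p) ((φ ^ (i + 1)) p) = dist p (φ p) := fun i => by
    rw [pow_succ, mul_apply, (φ ^ i).dist_eq]
  simpa [hstep] using dist_le_range_sum_dist (fun i => (φ ^ i) p) k

lemma transLength_conj (ψ φ : H ≃ᵢ H) : transLength (ψ * φ * ψ⁻¹) = transLength φ := by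
  unfold transLength
  rw [← ψ.surjective.iInf_comp]
  simp [mul_apply, ψ.dist_eq]

lemma le_transLength_of_orbit_growth (φ : H ≃ᵢ H) (x : H) (a δ : ℝ)
    (hgrowth : ∀ k : ℕ, k * a - δ ≤ dist x ((φ ^ k) x)) : a ≤ transLength φ := by
  have : Nonempty H := ⟨x⟩
  refine le_ciInf fun p => ?_
  have hbound : ∀ k : ℕ, (k : ℝ) * (a - dist p (φ p)) ≤ δ + 2 * dist x p := fun k => by
    have hupper := calc
      dist x ((φ ^ k) x) ≤ dist x p + dist p ((φ ^ k) p) + dist ((φ ^ k) p) ((φ ^ k) x) :=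
          dist_triangle4 _ _ _ _
      _ ≤ dist x p + k * dist p (φ p) + dist x p := by
          rw [(φ ^ k).dist_eq, dist_comm p x]
          gcongr
          exact φ.dist_pow_apply_le p k
    linarith [hgrowth k, hupper]
  by_contra! hlt
  obtain ⟨k, hk⟩ := exists_nat_gt ((δ + 2 * dist x p) / (a - dist p (φ p)))
  rw [div_lt_iff₀ (sub_pos.2 hlt)] at hk
  linarith [hbound k]

end IsometryEquiv

lemma AxisQuasiGeodesic.le_dist_pow {n : ℕ} {H : Type*} [MetricSpace H]
    {ρ : FreeGroup (Fin n) →* (H ≃ᵢ H)} {x : H} {K δ : ℝ} {w : FreeGroup (Fin n)}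
    (hw : AxisQuasiGeodesic ρ x K δ w) (k : ℕ) :
    K⁻¹ * wl (w ^ k) - δ ≤ dist x (ρ (w ^ k) x) := by
  simpa using (hw 1 (by simpa using pow_mem_axisVertices w 0) (w ^ k)
    (by simpa using pow_mem_axisVertices w k)).1

theorem primitiveStable_translation_lower_bound_general {n : ℕ}
    {H : Type*} [MetricSpace H]
    (ρ : FreeGroup (Fin n) →* (H ≃ᵢ H)) (h : PrimitiveStable ρ) :
    ∃ r : ℝ, 0 < r ∧ ∀ w : FreeGroup (Fin n), IsPrimitive w →
      r * (cwl w : ℝ) ≤ transLength (ρ w) ∧ 0 < transLength (ρ w) := by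
  obtain ⟨K, δ, x, hK, -, hPS⟩ := h
  have hK₀ : 0 < K⁻¹ := inv_pos.2 (zero_lt_one.trans_le hK)
  refine ⟨K⁻¹, hK₀, fun w hw => ?_⟩
  obtain ⟨c, hcr⟩ := exists_conj_isCyclicallyReduced w
  have hQG := hPS _ (hw.conj c) hcr
  have hℓ : K⁻¹ * wl (c * w * c⁻¹) ≤ transLength (ρ w) := by
    rw [← IsometryEquiv.transLength_conj (ρ c), ← map_inv, ← map_mul, ← map_mul]
    refine IsometryEquiv.le_transLength_of_orbit_growth _ x _ δ fun k => ?_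
    have hk := hQG.le_dist_pow k
    rw [wl_pow hcr, map_pow] at hk
    push_cast at hk
    linarith
  have hcwl : (cwl w : ℝ) ≤ wl (c * w * c⁻¹) := by exact_mod_cast cwl_le_wl_conj w c
  have hpos : (0 : ℝ) < wl (c * w * c⁻¹) := by
    exact_mod_cast wl_pos ((hw.conj c).ne_one)
  exact ⟨(mul_le_mul_of_nonneg_left hcwl hK₀.le).trans hℓ, (mul_pos hK₀ hpos).trans_le hℓ⟩

/-- If `ρ` is primitive-stable then there is `r > 0` with `ℓ_ρ(w) ≥ r·‖w‖` for every
primitive `w`; in particular `ρ(w)` is loxodromic (positive translation length) for every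
primitive `w`. -/
theorem primitiveStable_translation_lower_bound {n : ℕ} (hn : 2 ≤ n)
    {H : Type*} [MetricSpace H] [Nonempty H]
    (ρ : FreeGroup (Fin n) →* (H ≃ᵢ H)) (h : PrimitiveStable ρ) :
    ∃ r : ℝ, 0 < r ∧ ∀ w : FreeGroup (Fin n), IsPrimitive w →
      r * (cwl w : ℝ) ≤ transLength (ρ w) ∧ 0 < transLength (ρ w) :=
  primitiveStable_translation_lower_bound_general ρ h
end

section
/- Suppose ρ' : F_n → PSL(2,C), F_n = A * B with B nontrivial generated in part by a basis element b, and there is a sequence g_m ∈ A of reduced words with word length tending to infinity such that ρ'(g_m) → id. Then ρ' is not primitive-stable. -/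
open Filter

/-!
For `g ∈ A` the element `g * b` is the image of `b` under the transvection `b ↦ g * b`
fixing `A`, so it is primitive; it is cyclically reduced of word length `wl g + 1` since the
letter `b` does not occur in `g`. The quasi-geodesic lower bound between the axis vertices
`1` and `g * b` forces `d(x, ρ'(g b) x) ≥ K⁻¹ (wl g + 1) - δ → ∞`, whereas
`d(x, ρ'(g b) x) ≤ d(x, ρ'(b) x) + d(ρ'(g) y, y)` with `y = ρ'(b) x` stays bounded
when `ρ'(g_m) → id`.
-/

open Topology

namespace FreeGroup

variable {α : Type*} [DecidableEq α]

theorem forall_mem_toWord_fst_mem_of_mem_closure {S : Set α} {g : FreeGroup α}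
    (hg : g ∈ Subgroup.closure (of '' S)) : ∀ x ∈ g.toWord, x.1 ∈ S := by
  induction hg using Subgroup.closure_induction with
  | mem _ hx =>
    obtain ⟨s, hs, rfl⟩ := hx
    simpa using hs
  | one => simp
  | mul x y _ _ hx hy =>
    intro z hz
    rcases List.mem_append.mp ((toWord_mul_sublist x y).subset hz) with h | h
    exacts [hx z h, hy z h]
  | inv x _ hx =>
    intro z hz
    simp only [toWord_inv, invRev, List.mem_reverse, List.mem_map] at hz
    obtain ⟨w, hw, rfl⟩ := hz
    exact hx w hw

theorem toWord_mul_of_of_forall_ne {g : FreeGroup α} {a : α}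
    (h : ∀ x ∈ g.toWord, x.1 ≠ a) : (g * of a).toWord = g.toWord ++ [(a, true)] := by
  rw [toWord_mul, toWord_of]
  refine IsReduced.reduce_eq (List.isChain_append.mpr ⟨isReduced_toWord, IsReduced.singleton, ?_⟩)
  intro x hx y hy hxy
  obtain rfl : (a, true) = y := by simpa using hy
  exact absurd hxy (h x (List.mem_of_mem_getLast? hx))

def transvection (g : FreeGroup α) (j : α) : FreeGroup α →* FreeGroup α :=
  lift (Function.update of j (g * of j))

@[simp]
theorem transvection_of_self (g : FreeGroup α) (j : α) : transvection g j (of j) = g * of j := by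
  simp [transvection]

theorem transvection_apply_of_mem_closure {S : Set α} {j : α} (hj : j ∉ S) (g : FreeGroup α)
    {h : FreeGroup α} (hh : h ∈ Subgroup.closure (of '' S)) : transvection g j h = h := by
  refine MonoidHom.eqOn_closure (g := MonoidHom.id _) ?_ hh
  rintro _ ⟨s, hs, rfl⟩
  simp [transvection, Function.update_of_ne (ne_of_mem_of_not_mem hs hj)]

theorem transvection_comp_transvection {S : Set α} {j : α} (hj : j ∉ S) {g h : FreeGroup α}
    (hh : h ∈ Subgroup.closure (of '' S)) (hgh : h * g = 1) :
    (transvection g j).comp (transvection h j) = MonoidHom.id _ := by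
  refine ext_hom _ _ fun a => ?_
  by_cases ha : a = j
  · subst ha
    simp [transvection_apply_of_mem_closure hj g hh, ← mul_assoc, hgh]
  · simp [transvection, Function.update_of_ne ha]

def transvectionEquiv {S : Set α} {j : α} (hj : j ∉ S) {g : FreeGroup α}
    (hg : g ∈ Subgroup.closure (of '' S)) : FreeGroup α ≃* FreeGroup α :=
  MonoidHom.toMulEquiv (transvection g j) (transvection g⁻¹ j)
    (transvection_comp_transvection hj hg (mul_inv_cancel g))
    (transvection_comp_transvection hj (inv_mem hg) (inv_mul_cancel g))

end FreeGroup

open FreeGroup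

section Primitive

variable {n : ℕ} {g : FreeGroup (Fin n)} {j : Fin n}

theorem isPrimitive_mul_of {S : Set (Fin n)} (hj : j ∉ S)
    (hg : g ∈ Subgroup.closure (of '' S)) : IsPrimitive (g * of j) :=
  ⟨transvectionEquiv hj hg, j, transvection_of_self g j⟩

theorem isCyclicallyReduced_mul_of (h : ∀ x ∈ g.toWord, x.1 ≠ j) :
    IsCyclicallyReduced (g * of j) := by
  intro hne
  have hlast : (g * of j).toWord.getLast hne = (j, true) := by
    simp [toWord_mul_of_of_forall_ne h]
  rw [hlast]
  intro hhead
  have hmem := List.head_mem hne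
  rw [hhead, toWord_mul_of_of_forall_ne h] at hmem
  simp only [invL, List.mem_append, List.mem_singleton] at hmem
  exact hmem.elim (fun hmem => h _ hmem rfl) (by simp)

theorem wl_mul_of (h : ∀ x ∈ g.toWord, x.1 ≠ j) : wl (g * of j) = wl g + 1 := by
  simp [wl, toWord_mul_of_of_forall_ne h]

end Primitive

theorem one_mem_axisVertices {n : ℕ} (w : FreeGroup (Fin n)) : 1 ∈ axisVertices w :=
  ⟨0, 0, by simp [← one_eq_mk]⟩

theorem self_mem_axisVertices {n : ℕ} (w : FreeGroup (Fin n)) : w ∈ axisVertices w :=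
  ⟨1, 0, by simp [← one_eq_mk]⟩

theorem AxisQuasiGeodesic.le_dist_apply {n : ℕ} {H : Type*} [MetricSpace H]
    {ρ : FreeGroup (Fin n) →* (H ≃ᵢ H)} {x : H} {K δ : ℝ} {w : FreeGroup (Fin n)}
    (h : AxisQuasiGeodesic ρ x K δ w) : K⁻¹ * (wl w : ℝ) - δ ≤ dist x (ρ w x) := by
  simpa using (h 1 (one_mem_axisVertices w) w (self_mem_axisVertices w)).1

theorem not_primitiveStable_of_small_elements_general {n : ℕ}
    {H : Type*} [MetricSpace H]
    (ρ' : FreeGroup (Fin n) →* (H ≃ᵢ H))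
    (S : Set (Fin n)) (j : Fin n) (hj : j ∉ S)
    (g : ℕ → FreeGroup (Fin n))
    (hgA : ∀ m, g m ∈ Subgroup.closure (FreeGroup.of '' S))
    (hlen : Tendsto (fun m => wl (g m)) atTop atTop)
    (hconv : ∀ x : H, Tendsto (fun m => dist ((ρ' (g m)) x) x) atTop (nhds 0)) :
    ¬ PrimitiveStable ρ' := by
  rintro ⟨K, δ, x, hK, -, hps⟩
  set y := ρ' (of j) x
  have hlow (m : ℕ) : K⁻¹ * ((wl (g m) : ℝ) + 1) - δ ≤ dist x y + dist (ρ' (g m) y) y := by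
    have hletters : ∀ z ∈ (g m).toWord, z.1 ≠ j := fun z hz hzj =>
      hj (hzj ▸ forall_mem_toWord_fst_mem_of_mem_closure (hgA m) z hz)
    have hqg := (hps _ (isPrimitive_mul_of hj (hgA m))
      (isCyclicallyReduced_mul_of hletters)).le_dist_apply
    rw [wl_mul_of hletters, _root_.map_mul] at hqg
    push_cast at hqg
    calc _ ≤ dist x (ρ' (g m) y) := hqg
      _ ≤ dist x y + dist (ρ' (g m) y) y := by
        rw [dist_comm (ρ' (g m) y)]; exact dist_triangle _ _ _
  have hgrow : Tendsto (fun m => K⁻¹ * ((wl (g m) : ℝ) + 1) - δ) atTop atTop :=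
    tendsto_atTop_add_const_right _ _ <| Tendsto.const_mul_atTop (by positivity) <|
      tendsto_atTop_add_const_right _ _ (tendsto_natCast_atTop_atTop.comp hlen)
  have hbdd : Tendsto (fun m => dist x y + dist (ρ' (g m) y) y) atTop (𝓝 (dist x y)) := by
    simpa using (hconv y).const_add (dist x y)
  exact not_tendsto_atTop_of_tendsto_nhds hbdd (tendsto_atTop_mono hlow hgrow)

/-- If `Fₙ = A * B`, with `A` generated by the standard generators `{xᵢ : i ∈ S}` and `B`
containing a basis element `b = x_j`, `j ∉ S`, and there is a sequence `g_m ∈ A` of reduced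
words of length tending to infinity with `ρ'(g_m) → id`, then `ρ'` is not primitive-stable. -/
theorem not_primitiveStable_of_small_elements {n : ℕ} (hn : 2 ≤ n)
    {H : Type*} [MetricSpace H] [Nonempty H]
    (ρ' : FreeGroup (Fin n) →* (H ≃ᵢ H))
    (S : Set (Fin n)) (j : Fin n) (hj : j ∉ S)
    (g : ℕ → FreeGroup (Fin n))
    (hgA : ∀ m, g m ∈ Subgroup.closure (FreeGroup.of '' S))
    (hlen : Tendsto (fun m => wl (g m)) atTop atTop)
    (hconv : ∀ x : H, Tendsto (fun m => dist ((ρ' (g m)) x) x) atTop (nhds 0)) :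
    ¬ PrimitiveStable ρ' :=
  not_primitiveStable_of_small_elements_general ρ' S j hj g hgA hlen hconv
end

section
/- Let T be a simplicial tree, and let A_1, ..., A_k be lines (axes) in T such that the distance between any two A_i, A_j is at most D. Then there exists a point p ∈ T with d(p, A_i) ≤ D for all i simultaneously. -/
/-!
In a tree every point `x` has a gate on a line: a point of the line through which all geodesics
from `x` to the line pass. Gates are `1`-Lipschitz and, by the four-point condition, the distance
to a point is convex along geodesics; together these make every closed neighbourhood of a line
metrically convex. Two disjoint lines are joined by a bridge, so the distance between lines is
attained and the `D`-neighbourhoods of the axes meet pairwise. Convex subsets of a tree have the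
Helly property with Helly number `2`, since a median of three points taken from the pairwise
intersections of three convex sets lies in all of them.
-/
/-- A geodesic metric space. -/
def IsGeodesicSpace (T : Type*) [MetricSpace T] : Prop :=
  ∀ x y : T, ∃ f : ℝ → T, f 0 = x ∧ f (dist x y) = y ∧
    ∀ s ∈ Set.Icc 0 (dist x y), ∀ t ∈ Set.Icc 0 (dist x y), dist (f s) (f t) = |s - t|

/-- The four-point condition with `δ = 0`. -/
def ZeroHyperbolic (T : Type*) [MetricSpace T] : Prop :=
  ∀ x y z w : T, dist x y + dist z w ≤ max (dist x z + dist y w) (dist x w + dist y z)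

/-- A (simplicial or ℝ-)tree: a geodesic, 0-hyperbolic metric space. -/
def IsRTree (T : Type*) [MetricSpace T] : Prop := IsGeodesicSpace T ∧ ZeroHyperbolic T

/-- The distance between two subsets. -/
noncomputable def setDist {T : Type*} [MetricSpace T] (A B : Set T) : ℝ :=
  sInf {d | ∃ a ∈ A, ∃ b ∈ B, d = dist a b}

open Metric Set

section

variable {T : Type*} [MetricSpace T]

theorem le_setDist {A B : Set T} {d : ℝ} (hA : A.Nonempty) (hB : B.Nonempty)
    (h : ∀ a ∈ A, ∀ b ∈ B, d ≤ dist a b) : d ≤ setDist A B := by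
  obtain ⟨a, ha⟩ := hA
  obtain ⟨b, hb⟩ := hB
  refine le_csInf ⟨_, a, ha, b, hb, rfl⟩ ?_
  rintro _ ⟨a, ha, b, hb, rfl⟩
  exact h a ha b hb

namespace ZeroHyperbolic

theorem dist_add_le_or (hT : ZeroHyperbolic T) {x y m : T}
    (hm : dist x m + dist m y = dist x y) (z : T) :
    dist z m + dist x m ≤ dist z x ∨ dist z m + dist m y ≤ dist z y := by
  rcases le_max_iff.1 (hT x y z m) with h | h
  · left; linarith [dist_comm x z, dist_comm y m]
  · right; linarith [dist_comm y z]

theorem eq_of_dist_eq (hT : ZeroHyperbolic T) {a b z m : T}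
    (hz : dist a z + dist z b = dist a b) (hm : dist a m + dist m b = dist a b)
    (hzm : dist a z = dist a m) : z = m := by
  refine dist_le_zero.1 ?_
  rcases hT.dist_add_le_or hm z with h | h <;> linarith [dist_comm z a]

end ZeroHyperbolic

theorem IsRTree.exists_median (hT : IsRTree T) (x y z : T) :
    ∃ m : T, dist x m + dist m y = dist x y ∧ dist x m + dist m z = dist x z ∧
      dist y m + dist m z = dist y z := by
  obtain ⟨γ, hγ0, hγ1, hγ⟩ := hT.1 x y
  set α := (dist x y + dist x z - dist y z) / 2 with hα_def
  have hα : α ∈ Icc 0 (dist x y) := by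
    constructor <;> linarith [hα_def, dist_triangle y x z, dist_triangle x y z, dist_comm x y]
  have hxm : dist x (γ α) = α := by
    rw [← hγ0, hγ 0 (left_mem_Icc.2 (hα.1.trans hα.2)) α hα, zero_sub, abs_neg, abs_of_nonneg hα.1]
  have hmy : dist (γ α) y = dist x y - α := by
    conv_lhs => rw [← hγ1]
    rw [hγ α hα _ (right_mem_Icc.2 (hα.1.trans hα.2)), abs_of_nonpos (by linarith [hα.2])]
    ring
  have hmz : dist z (γ α) ≤ dist x z - α := by
    rcases hT.2.dist_add_le_or (y := y) (by rw [hxm, hmy]; ring) z with h | h <;>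
      linarith [dist_comm x z, dist_comm y z]
  refine ⟨γ α, by rw [hxm, hmy]; ring, ?_, ?_⟩ <;>
    linarith [dist_comm z (γ α), dist_comm y (γ α), dist_triangle x (γ α) z,
      dist_triangle y (γ α) z]

def IsMetricConvex (C : Set T) : Prop :=
  ∀ ⦃x⦄, x ∈ C → ∀ ⦃y⦄, y ∈ C → ∀ ⦃m⦄, dist x m + dist m y = dist x y → m ∈ C

theorem IsMetricConvex.inter {C C' : Set T} (h : IsMetricConvex C) (h' : IsMetricConvex C') :
    IsMetricConvex (C ∩ C') :=
  fun _ hx _ hy _ hm => ⟨h hx.1 hy.1 hm, h' hx.2 hy.2 hm⟩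

namespace IsRTree

theorem inter_inter_nonempty (hT : IsRTree T) {A B C : Set T} (hA : IsMetricConvex A)
    (hB : IsMetricConvex B) (hC : IsMetricConvex C) (hAB : (A ∩ B).Nonempty)
    (hBC : (B ∩ C).Nonempty) (hAC : (A ∩ C).Nonempty) : (A ∩ B ∩ C).Nonempty := by
  obtain ⟨x, hxA, hxB⟩ := hAB
  obtain ⟨y, hyB, hyC⟩ := hBC
  obtain ⟨z, hzA, hzC⟩ := hAC
  obtain ⟨m, hxy, hxz, hyz⟩ := hT.exists_median x y z
  exact ⟨m, ⟨hA hxA hzA hxz, hB hxB hyB hxy⟩, hC hyC hzC hyz⟩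

theorem helly [Nonempty T] (hT : IsRTree T) {ι : Type*} (s : Finset ι) (C : ι → Set T)
    (hC : ∀ i ∈ s, IsMetricConvex (C i)) (hs : ∀ i ∈ s, ∀ j ∈ s, (C i ∩ C j).Nonempty) :
    ∃ p, ∀ i ∈ s, p ∈ C i := by
  classical
  induction s using Finset.induction_on generalizing C with
  | empty => exact ⟨Classical.arbitrary T, by simp⟩
  | insert a s _ ih =>
    simp only [Finset.forall_mem_insert] at hC hs ⊢
    rcases s.eq_empty_or_nonempty with rfl | ⟨b, hb⟩
    · obtain ⟨q, hq, -⟩ := hs.1.1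
      exact ⟨q, hq, by simp⟩
    obtain ⟨p, hp⟩ := ih (fun i => C i ∩ C a) (fun i hi => (hC.2 i hi).inter hC.1)
      fun i hi j hj => by
        obtain ⟨q, ⟨hqi, hqj⟩, hqa⟩ := hT.inter_inter_nonempty (hC.2 i hi) (hC.2 j hj) hC.1
          ((hs.2 i hi).2 j hj) (hs.2 j hj).1 (hs.2 i hi).1
        exact ⟨q, ⟨hqi, hqa⟩, hqj, hqa⟩
    exact ⟨p, (hp b hb).2, fun i hi => (hp i hi).1⟩

end IsRTree

theorem Isometry.exists_forall_dist_le {f : ℝ → T} (hf : Isometry f) (x : T) :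
    ∃ u, ∀ s, dist x (f u) ≤ dist x (f s) := by
  refine (continuous_const.dist hf.continuous).exists_forall_le <|
    Filter.tendsto_atTop_mono (fun s => ?_) <|
      Filter.tendsto_atTop_add_const_right _ (-dist x (f 0)) (tendsto_dist_left_cocompact_atTop 0)
  rw [← hf.dist_eq]
  linarith [dist_triangle (f 0) x (f s), dist_comm x (f 0)]

theorem ZeroHyperbolic.mem_range_of_dist_add_eq (hT : ZeroHyperbolic T) {f : ℝ → T}
    (hf : Isometry f) {p q : ℝ} {z : T} (hz : dist (f p) z + dist z (f q) = dist (f p) (f q)) :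
    z ∈ range f := by
  have he : 0 ≤ dist (f p) (f q) - dist (f p) z := by linarith [dist_nonneg (x := z) (y := f q)]
  obtain ⟨r, hpr, hrq⟩ := exists_dist_le_le dist_nonneg he
    (by rw [← hf.dist_eq]; linarith : dist p q ≤ dist (f p) (f q) - dist (f p) z + dist (f p) z)
  rw [← hf.dist_eq] at hpr hrq
  have hpq := dist_triangle (f p) (f r) (f q)
  exact ⟨r, hT.eq_of_dist_eq (by linarith) hz (by linarith)⟩

def IsGate (f : ℝ → T) (x : T) (u : ℝ) : Prop :=
  ∀ s, dist x (f s) = dist x (f u) + dist u s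

theorem IsRTree.exists_isGate (hT : IsRTree T) {f : ℝ → T} (hf : Isometry f) (x : T) :
    ∃ u, IsGate f x u := by
  obtain ⟨u, hu⟩ := hf.exists_forall_dist_le x
  refine ⟨u, fun s => ?_⟩
  obtain ⟨m, hxu, hxs, hus⟩ := hT.exists_median x (f u) (f s)
  obtain ⟨v, rfl⟩ := hT.2.mem_range_of_dist_add_eq hf hus
  have hvu : f v = f u := dist_le_zero.1 (by linarith [hu v])
  rw [← hf.dist_eq, ← hxs, hvu]

namespace IsGate

variable {f : ℝ → T} {x y : T} {u v : ℝ}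

theorem infDist_eq (h : IsGate f x u) : infDist x (range f) = dist x (f u) := by
  refine le_antisymm (infDist_le_dist_of_mem (mem_range_self u))
    ((le_infDist (range_nonempty f)).2 ?_)
  rintro _ ⟨s, rfl⟩
  linarith [h s, dist_nonneg (x := u) (y := s)]

theorem eq_or_add_le (hT : ZeroHyperbolic T) (hf : Isometry f) (hu : IsGate f x u)
    (hv : IsGate f y v) : u = v ∨ dist x (f u) + dist u v + dist (f v) y ≤ dist x y := by
  have := hu v
  have := hv u
  rcases le_max_iff.1 (hT x (f v) y (f u)) with h | h
  · right; linarith [hf.dist_eq v u, dist_comm u v, dist_comm y (f v)]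
  · left; exact dist_le_zero.1 (by linarith [dist_comm u v, dist_comm y (f v)])

theorem dist_le (hT : ZeroHyperbolic T) (hf : Isometry f) (hu : IsGate f x u)
    (hv : IsGate f y v) : dist u v ≤ dist x y := by
  rcases hu.eq_or_add_le hT hf hv with rfl | h
  · simp
  · linarith [dist_nonneg (x := x) (y := f u), dist_nonneg (x := f v) (y := y)]

end IsGate

theorem IsRTree.isMetricConvex_infDist_le (hT : IsRTree T) {f : ℝ → T} (hf : Isometry f)
    (r : ℝ) : IsMetricConvex {p | infDist p (range f) ≤ r} := by
  intro x hx y hy m hm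
  obtain ⟨u, hu⟩ := hT.exists_isGate hf x
  obtain ⟨v, hv⟩ := hT.exists_isGate hf y
  rw [mem_ofPred_eq, hu.infDist_eq] at hx
  rw [mem_ofPred_eq, hv.infDist_eq] at hy
  obtain ⟨s, hus, hsv⟩ := exists_dist_le_le dist_nonneg dist_nonneg
    ((hu.dist_le hT.2 hf hv).trans (hm.symm.trans (add_comm _ _)).le)
  refine (infDist_le_dist_of_mem (mem_range_self s)).trans ?_
  rcases hT.2.dist_add_le_or hm (f s) with h | h
  · linarith [hu s, dist_comm x (f s), dist_comm m (f s)]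
  · linarith [hv s, dist_comm y (f s), dist_comm m (f s), dist_comm v s]

theorem IsGate.eq_of_disjoint_range (hT : ZeroHyperbolic T) {f g : ℝ → T} (hf : Isometry f)
    (hg : Isometry g) (hfg : Disjoint (range f) (range g)) {t t' u v : ℝ}
    (hu : IsGate g (f t) u) (hv : IsGate g (f t') v) : u = v := by
  refine (hu.eq_or_add_le hT hg hv).resolve_right fun h => ?_
  have hbetween : dist (f t) (g u) + dist (g u) (f t') = dist (f t) (f t') :=
    le_antisymm (by linarith [dist_triangle (g u) (g v) (f t'), hg.dist_eq u v])
      (dist_triangle _ _ _)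
  obtain ⟨w, hw⟩ := hT.mem_range_of_dist_add_eq hf hbetween
  exact hfg.ne_of_mem (mem_range_self w) (mem_range_self u) hw

theorem IsRTree.exists_forall_dist_le_dist (hT : IsRTree T) {f g : ℝ → T} (hf : Isometry f)
    (hg : Isometry g) : ∃ s t, ∀ s' t', dist (f s) (g t) ≤ dist (f s') (g t') := by
  by_cases hfg : Disjoint (range f) (range g)
  swap
  · obtain ⟨_, ⟨s, rfl⟩, t, ht⟩ := not_disjoint_iff.1 hfg
    exact ⟨s, t, fun _ _ => by rw [ht, dist_self]; exact dist_nonneg⟩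
  -- disjoint lines: every point of `f` has the same gate on `g`
  choose σ hσ using fun t => hT.exists_isGate hg (f t)
  obtain ⟨c, hc⟩ := hf.exists_forall_dist_le (g (σ 0))
  refine ⟨c, σ 0, fun s t => ?_⟩
  calc dist (f c) (g (σ 0)) ≤ dist (f s) (g (σ 0)) := by simpa only [dist_comm] using hc s
    _ = dist (f s) (g (σ s)) := by rw [(hσ s).eq_of_disjoint_range hT.2 hf hg hfg (hσ 0)]
    _ ≤ dist (f s) (g t) := by rw [hσ s t]; linarith [dist_nonneg (x := σ s) (y := t)]

end

/-- If `A₁, …, A_k` are lines (isometrically embedded copies of ℝ) in a tree with pairwise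
distances at most `D`, then some point `p` is within distance `D` of all of them
simultaneously. -/
theorem common_center_for_axes {T : Type*} [MetricSpace T] [Nonempty T]
    (hT : IsRTree T) (k : ℕ) (A : Fin k → Set T)
    (hline : ∀ i, ∃ f : ℝ → T, (∀ s t : ℝ, dist (f s) (f t) = |s - t|) ∧ Set.range f = A i)
    (D : ℝ) (hD : ∀ i j, setDist (A i) (A j) ≤ D) :
    ∃ p : T, ∀ i, Metric.infDist p (A i) ≤ D := by
  choose f hf_dist hf_range using hline
  have hf (i : Fin k) : Isometry (f i) :=
    Isometry.of_dist_eq fun s t => by rw [hf_dist, Real.dist_eq]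
  have hmeet (i j : Fin k) :
      ({p | infDist p (A i) ≤ D} ∩ {p | infDist p (A j) ≤ D}).Nonempty := by
    obtain ⟨s, t, hst⟩ := hT.exists_forall_dist_le_dist (hf i) (hf j)
    have hdist : dist (f i s) (f j t) ≤ D := by
      refine (le_setDist (range_nonempty _) (range_nonempty _) ?_).trans
        (hf_range i ▸ hf_range j ▸ hD i j)
      rintro _ ⟨s', rfl⟩ _ ⟨t', rfl⟩
      exact hst s' t'
    refine ⟨f i s, ?_, ?_⟩
    · rw [mem_ofPred_eq, infDist_zero_of_mem (hf_range i ▸ mem_range_self s)]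
      exact dist_nonneg.trans hdist
    · exact (infDist_le_dist_of_mem (hf_range j ▸ mem_range_self t)).trans hdist
  obtain ⟨p, hp⟩ := hT.helly Finset.univ (fun i => {p | infDist p (A i) ≤ D})
    (fun i _ => hf_range i ▸ hT.isMetricConvex_infDist_le (hf i) D) fun i _ j _ => hmeet i j
  exact ⟨p, fun i => hp i (Finset.mem_univ i)⟩
end
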